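/- Let e_0, ..., e_{n-1} ∈ ℤ^n with e_i · e_j = -δ_{ij}. Let D_j = e_{i_j} - e_{I_j} for j = 0, ..., s-1 (s ≥ 3) be type-a classes with pairwise distinct indices i_j, pairwise disjoint sets I_j, satisfying D_j · D_{j+1} = 1 (indices mod s) and i_1 ∈ I_0. Then i_{j+1} ∈ I_j for all j = 0, ..., s-1 (indices mod s). -/
import Mathlib


open Finset

/-- The standard negative definite intersection form on `ℤ^n`. -/
def inter {n : ℕ} (x y : Fin n → ℤ) : ℤ := -∑ k, x k * y k

/-- The Donaldson class `e i`. -/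
def E {n : ℕ} (i : Fin n) : Fin n → ℤ := Pi.single i 1

/-- `e_I = ∑_{i ∈ I} e_i`. -/
def ES {n : ℕ} (I : Finset (Fin n)) : Fin n → ℤ := ∑ i ∈ I, E i

lemma ES_apply {n : ℕ} (A : Finset (Fin n)) (k : Fin n) :
    ES A k = if k ∈ A then 1 else 0 := by
  classical
  simp [ES, E, Finset.sum_apply, Pi.single_apply, Finset.sum_ite_eq]

lemma key {n : ℕ} (a b : Fin n) (A B : Finset (Fin n)) (hab : a ≠ b)
    (hAB : Disjoint A B) (haA : a ∉ A) (hbB : b ∉ B)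
    (h : inter (E a - ES A) (E b - ES B) = 1) : a ∈ B ∨ b ∈ A := by
  classical
  by_contra hc
  push_neg at hc
  obtain ⟨haB, hbA⟩ := hc
  have hz : ∀ k, (E a - ES A) k * (E b - ES B) k = 0 := by
    intro k
    have hE : ∀ (c : Fin n), E c k = if k = c then 1 else 0 := by
      intro c; simp [E, Pi.single_apply]
    simp only [Pi.sub_apply, hE, ES_apply]
    by_cases hka : k = a
    · subst hka
      simp [haA, hab, haB]
    by_cases hkb : k = b
    · subst hkb
      simp [hbB, hbA, hka]
    by_cases hkA : k ∈ A
    · have : k ∉ B := Finset.disjoint_left.mp hAB hkA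
      simp [hka, hkb, hkA, this]
    by_cases hkB : k ∈ B
    · simp [hka, hkb, hkA, hkB]
    · simp [hka, hkb, hkA, hkB]
  have h0 : ∑ k, (E a - ES A) k * (E b - ES B) k = 0 :=
    Finset.sum_eq_zero fun k _ => hz k
  simp only [inter] at h
  rw [h0] at h
  simp at h

theorem stmt8 {n s : ℕ} (hs : 3 ≤ s) (i : Fin s → Fin n) (I : Fin s → Finset (Fin n))
    (hinj : Function.Injective i)
    (hdisj : ∀ p q : Fin s, p ≠ q → Disjoint (I p) (I q))
    (ha : ∀ j : Fin s, i j ∉ I j)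
    (hadj : ∀ j : Fin s,
      inter (E (i j) - ES (I j)) (E (i (j + ⟨1, by omega⟩)) - ES (I (j + ⟨1, by omega⟩))) = 1)
    (h1 : i ⟨1, by omega⟩ ∈ I ⟨0, by omega⟩) :
    ∀ j : Fin s, i (j + ⟨1, by omega⟩) ∈ I j := by
  have hs0 : 0 < s := by omega
  set o : Fin s := ⟨1, by omega⟩ with ho
  have hv : ∀ j : Fin s, (j + o).val = (j.val + 1) % s := by
    intro j; simp [Fin.add_def, ho]
  have hne1 : ∀ j : Fin s, j ≠ j + o := by
    intro j h
    have hh := congrArg Fin.val h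
    rw [hv] at hh
    rcases Nat.lt_or_ge (j.val + 1) s with h' | h'
    · rw [Nat.mod_eq_of_lt h'] at hh; omega
    · have hj := j.isLt
      have hsv : j.val + 1 = s := by omega
      rw [hsv, Nat.mod_self] at hh; omega
  have hne2 : ∀ j : Fin s, j ≠ j + o + o := by
    intro j h
    have hh := congrArg Fin.val h
    rw [hv, hv] at hh
    have hj := j.isLt
    by_cases hc1 : j.val + 1 = s
    · rw [hc1, Nat.mod_self, Nat.mod_eq_of_lt (by omega : 0 + 1 < s)] at hh
      omega
    · rw [Nat.mod_eq_of_lt (by omega : j.val + 1 < s)] at hh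
      by_cases hc2 : j.val + 1 + 1 = s
      · rw [hc2, Nat.mod_self] at hh; omega
      · rw [Nat.mod_eq_of_lt (by omega : j.val + 1 + 1 < s)] at hh; omega
  have step : ∀ j : Fin s, i (j + o) ∈ I j → i (j + o + o) ∈ I (j + o) := by
    intro j hj
    have hne : j + o ≠ j + o + o := hne1 (j + o)
    have hkey := key (i (j + o)) (i (j + o + o)) (I (j + o)) (I (j + o + o))
      (fun h => hne (hinj h)) (hdisj _ _ hne) (ha _) (ha _) (hadj (j + o))
    rcases hkey with h | h
    · exact absurd h (Finset.disjoint_left.mp (hdisj j (j + o + o) (hne2 j)) hj)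
    · exact h
  have main : ∀ m : ℕ, ∀ hm : m < s, i (⟨m, hm⟩ + o) ∈ I ⟨m, hm⟩ := by
    intro m
    induction m with
    | zero =>
      intro hm
      have he : (⟨0, hm⟩ : Fin s) + o = ⟨1, by omega⟩ := by
        apply Fin.ext; rw [hv]
        show (0 + 1) % s = 1
        exact Nat.mod_eq_of_lt (by omega)
      rw [he]; exact h1
    | succ m ih =>
      intro hm
      have hm' : m < s := by omega
      have hadd : (⟨m, hm'⟩ : Fin s) + o = ⟨m + 1, hm⟩ := by
        apply Fin.ext; rw [hv]
        show (m + 1) % s = m + 1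
        exact Nat.mod_eq_of_lt hm
      have hst := step ⟨m, hm'⟩ (ih hm')
      rwa [hadd] at hst
  intro j
  have hj : j = ⟨j.val, j.isLt⟩ := rfl
  rw [hj]
  exact main j.val j.isLt
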